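/- Let f : ℝ → ℝ be defined by f(x) = 2^{−4x²} for x > 0 and f(x) = 0 for x ≤ 0. Then for every y > 0: D_f(y) > 0 if and only if y < √(2/3), D_f(y) = 0 if and only if y = √(2/3), and D_f(y) < 0 if and only if y > √(2/3). -/
import Mathlib


/-- The doubling-only expected-benefit formula. -/
noncomputable def Df (f : ℝ → ℝ) (y : ℝ) : ℝ :=
  (-(y / 2) * f (y / 2) + 2 * y * f y) / (f (y / 2) + 2 * f y)

/-- The (unnormalised) exponential-type density `2^{-4x²}` on `x > 0`. -/
noncomputable def expDensity : ℝ → ℝ := fun x =>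
  if 0 < x then (2 : ℝ) ^ (-4 * x ^ 2 : ℝ) else 0

/-- For the density `2^{-4x²}` under the doubling-only process, the expected
benefit is positive, zero or negative according as `y` is less than, equal to, or
greater than `√(2/3)`. -/
theorem exp_density_switch (y : ℝ) (hy : 0 < y) :
    (0 < Df expDensity y ↔ y < Real.sqrt (2 / 3)) ∧
      (Df expDensity y = 0 ↔ y = Real.sqrt (2 / 3)) ∧
      (Df expDensity y < 0 ↔ Real.sqrt (2 / 3) < y) := by
  have hy2 : 0 < y / 2 := by positivity
  have hf1 : expDensity (y / 2) = (2 : ℝ) ^ (-(y ^ 2) : ℝ) := by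
    simp only [expDensity, if_pos hy2]
    norm_num
    ring_nf
  have hf2 : expDensity y = (2 : ℝ) ^ (-4 * y ^ 2 : ℝ) := by
    simp only [expDensity, if_pos hy]
  set a := (2 : ℝ) ^ (-(y ^ 2) : ℝ) with ha
  set b := (2 : ℝ) ^ (-4 * y ^ 2 : ℝ) with hb
  have hapos : 0 < a := Real.rpow_pos_of_pos two_pos _
  have hbpos : 0 < b := Real.rpow_pos_of_pos two_pos _
  have hden : 0 < a + 2 * b := by linarith
  have hDf : Df expDensity y = (y * (2 * b - a / 2)) / (a + 2 * b) := by
    rw [Df, hf1, hf2]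
    ring_nf
  have h4b : (4 : ℝ) * b = (2 : ℝ) ^ (2 - 4 * y ^ 2 : ℝ) := by
    rw [hb, show (2 - 4 * y ^ 2 : ℝ) = 2 + -4 * y ^ 2 by ring,
      Real.rpow_add two_pos]
    have : (2 : ℝ) ^ (2 : ℝ) = 4 := by
      rw [show (2 : ℝ) = ((2 : ℕ) : ℝ) by norm_num, Real.rpow_natCast]
      norm_num
    rw [this]
  -- three sign lemmas
  have L1 : y < Real.sqrt (2 / 3) → 0 < Df expDensity y := by
    intro h
    have hsq : y ^ 2 < 2 / 3 := (Real.lt_sqrt hy.le).mp h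
    have hexp : (-(y ^ 2) : ℝ) < 2 - 4 * y ^ 2 := by nlinarith
    have hab : a < 4 * b := by
      rw [h4b, ha]
      exact (Real.rpow_lt_rpow_left_iff one_lt_two).mpr hexp
    rw [hDf]
    exact div_pos (by nlinarith) hden
  have L2 : y = Real.sqrt (2 / 3) → Df expDensity y = 0 := by
    intro h
    have hsq : y ^ 2 = 2 / 3 := by
      rw [h, Real.sq_sqrt (by norm_num : (0:ℝ) ≤ 2/3)]
    have hexp : (-(y ^ 2) : ℝ) = 2 - 4 * y ^ 2 := by nlinarith
    have hab : a = 4 * b := by rw [h4b, ha, hexp]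
    rw [hDf]
    have : 2 * b - a / 2 = 0 := by rw [hab]; ring
    rw [this]
    simp
  have L3 : Real.sqrt (2 / 3) < y → Df expDensity y < 0 := by
    intro h
    have hsq : 2 / 3 < y ^ 2 := (Real.sqrt_lt' hy).mp h
    have hexp : (2 - 4 * y ^ 2 : ℝ) < -(y ^ 2) := by nlinarith
    have hab : 4 * b < a := by
      rw [h4b, ha]
      exact (Real.rpow_lt_rpow_left_iff one_lt_two).mpr hexp
    rw [hDf]
    exact div_neg_of_neg_of_pos (by nlinarith) hden
  refine ⟨⟨fun h => ?_, L1⟩, ⟨fun h => ?_, L2⟩, ⟨fun h => ?_, L3⟩⟩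
  · rcases lt_trichotomy y (Real.sqrt (2 / 3)) with h' | h' | h'
    · exact h'
    · exact absurd (L2 h') (by linarith)
    · exact absurd (L3 h') (by linarith)
  · rcases lt_trichotomy y (Real.sqrt (2 / 3)) with h' | h' | h'
    · exact absurd (L1 h') (by linarith)
    · exact h'
    · exact absurd (L3 h') (by linarith)
  · rcases lt_trichotomy y (Real.sqrt (2 / 3)) with h' | h' | h'
    · exact absurd (L1 h') (by linarith)
    · exact absurd (L2 h') (by linarith)
    · exact h'
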